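/- arXiv:2406.08389 — 6 statements merged into one kernel-verified Lean document; each statement's English description precedes it below -/
import Mathlib

section
/- Let f : ℍ → ℍ be holomorphic (f holomorphic on ℍ with f(ℍ) ⊆ ℍ). Suppose that for every z ∈ ℍ the orbit satisfies |f^[n](z)| → ∞ and arg(f^[n](z)) converges to a limit belonging to {0, π}. Then either arg(f^[n](z)) → 0 for every z ∈ ℍ, or arg(f^[n](z)) → π for every z ∈ ℍ; the two alternatives cannot occur for different starting points. -/
/-!
Under the Möbius maps `z ↦ (z - w) / (z - conj w)` the Schwarz lemma becomes the Schwarz–Pick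
inequality `ρ(f z, f w) ≤ ρ(z, w)`, so two orbits stay at pseudo-hyperbolic distance at most
`ρ(z, w) < 1`. But if `arg (f^[n] z) → 0` and `arg (f^[n] w) → π`, then `f^[n] z` lies in the
right half-plane while `f^[n] w` approaches the negative real axis in angle, and
`1 - ρ ≤ 2 Im w / ‖z - conj w‖ ≤ -2 Im w / Re w = -2 tan (arg w) → 0`, a contradiction.
-/

open Filter Topology Set ComplexConjugate Real

noncomputable def halfPlaneToDisk (w z : ℂ) : ℂ := (z - w) / (z - conj w)

noncomputable def diskToHalfPlane (w u : ℂ) : ℂ := (w - conj w * u) / (1 - u)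

noncomputable def pseudoHyperbolicDist (z w : ℂ) : ℝ := ‖halfPlaneToDisk w z‖

section

variable {z w u : ℂ}

lemma sub_conj_ne_zero (hz : 0 < z.im) (hw : 0 < w.im) : z - conj w ≠ 0 := by
  intro h
  have := congrArg Complex.im h
  simp only [Complex.sub_im, Complex.conj_im, sub_neg_eq_add, Complex.zero_im] at this
  linarith

lemma norm_sub_lt_norm_sub_conj (hz : 0 < z.im) (hw : 0 < w.im) : ‖z - w‖ < ‖z - conj w‖ := by
  rw [← sq_lt_sq₀ (norm_nonneg _) (norm_nonneg _), Complex.sq_norm, Complex.sq_norm]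
  simp only [Complex.normSq_apply, Complex.sub_re, Complex.sub_im, Complex.conj_re,
    Complex.conj_im]
  nlinarith

lemma pseudoHyperbolicDist_lt_one (hz : 0 < z.im) (hw : 0 < w.im) :
    pseudoHyperbolicDist z w < 1 := by
  rw [pseudoHyperbolicDist, halfPlaneToDisk, norm_div,
    div_lt_one (norm_pos_iff.2 (sub_conj_ne_zero hz hw))]
  exact norm_sub_lt_norm_sub_conj hz hw

lemma halfPlaneToDisk_self : halfPlaneToDisk w w = 0 := by
  simp [halfPlaneToDisk]

lemma differentiableOn_halfPlaneToDisk (hw : 0 < w.im) :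
    DifferentiableOn ℂ (halfPlaneToDisk w) {z | 0 < z.im} :=
  (differentiableOn_id.sub_const _).div (differentiableOn_id.sub_const _)
    fun _ hz => sub_conj_ne_zero hz hw

lemma diskToHalfPlane_zero : diskToHalfPlane w 0 = w := by
  simp [diskToHalfPlane]

lemma differentiableOn_diskToHalfPlane :
    DifferentiableOn ℂ (diskToHalfPlane w) (Metric.ball 0 1) := by
  refine ((differentiableOn_const _).sub (differentiableOn_id.const_mul _)).div
    ((differentiableOn_const _).sub differentiableOn_id) fun u hu h => ?_
  rw [sub_eq_zero] at h
  simp [← h] at hu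

/-- The imaginary part equals `Im w * (1 - ‖u‖²) / ‖1 - u‖²`. -/
lemma im_diskToHalfPlane_pos (hw : 0 < w.im) (hu : ‖u‖ < 1) : 0 < (diskToHalfPlane w u).im := by
  have hu1 : u.re * u.re + u.im * u.im < 1 := by
    rw [← Complex.normSq_apply, ← Complex.sq_norm]
    nlinarith [norm_nonneg u]
  have hne : 1 - u ≠ 0 := fun h => by simp [← sub_eq_zero.1 h] at hu
  rw [diskToHalfPlane, Complex.div_im, div_sub_div_same]
  refine div_pos ?_ (Complex.normSq_pos.2 hne)
  simp only [Complex.sub_im, Complex.sub_re, Complex.mul_im, Complex.mul_re, Complex.conj_re,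
    Complex.conj_im, Complex.one_re, Complex.one_im]
  nlinarith

lemma diskToHalfPlane_halfPlaneToDisk (hz : 0 < z.im) (hw : 0 < w.im) :
    diskToHalfPlane w (halfPlaneToDisk w z) = z := by
  have hzw := sub_conj_ne_zero hz hw
  have hww := sub_conj_ne_zero hw hw
  rw [diskToHalfPlane, halfPlaneToDisk, div_eq_iff]
  · field_simp
    ring
  · rw [one_sub_div hzw, sub_sub_sub_cancel_left]
    exact div_ne_zero hww hzw

end

section

variable {f : ℂ → ℂ} {z w : ℂ}

theorem pseudoHyperbolicDist_map_le (hf : DifferentiableOn ℂ f {z | 0 < z.im})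
    (hmaps : MapsTo f {z | 0 < z.im} {z | 0 < z.im}) (hz : 0 < z.im) (hw : 0 < w.im) :
    pseudoHyperbolicDist (f z) (f w) ≤ pseudoHyperbolicDist z w := by
  set g := halfPlaneToDisk (f w) ∘ f ∘ diskToHalfPlane w
  have hS : MapsTo (diskToHalfPlane w) (Metric.ball 0 1) {z | 0 < z.im} :=
    fun u hu => im_diskToHalfPlane_pos hw (mem_ball_zero_iff.1 hu)
  have hg : DifferentiableOn ℂ g (Metric.ball 0 1) :=
    (differentiableOn_halfPlaneToDisk (hmaps hw)).comp
      (hf.comp differentiableOn_diskToHalfPlane hS) (hmaps.comp hS)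
  have hg_maps : MapsTo g (Metric.ball 0 1) (Metric.closedBall 0 1) := fun u hu =>
    mem_closedBall_zero_iff.2 (pseudoHyperbolicDist_lt_one (hmaps (hS hu)) (hmaps hw)).le
  have hg0 : g 0 = 0 := by simp [g, diskToHalfPlane_zero, halfPlaneToDisk_self]
  simpa [g, pseudoHyperbolicDist, diskToHalfPlane_halfPlaneToDisk hz hw] using
    Complex.norm_le_norm_of_mapsTo_ball hg hg_maps hg0 (pseudoHyperbolicDist_lt_one hz hw)

theorem pseudoHyperbolicDist_iterate_le (hf : DifferentiableOn ℂ f {z | 0 < z.im})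
    (hmaps : MapsTo f {z | 0 < z.im} {z | 0 < z.im}) (hz : 0 < z.im) (hw : 0 < w.im) (n : ℕ) :
    pseudoHyperbolicDist (f^[n] z) (f^[n] w) ≤ pseudoHyperbolicDist z w := by
  induction n with
  | zero => rfl
  | succ n ih =>
    rw [Function.iterate_succ_apply', Function.iterate_succ_apply']
    exact (pseudoHyperbolicDist_map_le hf hmaps (hmaps.iterate n hz) (hmaps.iterate n hw)).trans ih

end

lemma one_add_two_mul_im_div_re_le_pseudoHyperbolicDist {z w : ℂ} (hz : 0 < z.im)
    (hw : 0 < w.im) (hz_re : 0 ≤ z.re) (hw_re : w.re < 0) :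
    1 + 2 * (w.im / w.re) ≤ pseudoHyperbolicDist z w := by
  have hden : 0 < ‖z - conj w‖ := norm_pos_iff.2 (sub_conj_ne_zero hz hw)
  have h_re : -w.re ≤ ‖z - conj w‖ := by
    have := (z - conj w).re_le_norm
    simp only [Complex.sub_re, Complex.conj_re] at this
    linarith
  have h_tri : ‖z - conj w‖ ≤ ‖z - w‖ + 2 * w.im := by
    calc ‖z - conj w‖ = ‖(z - w) + (w - conj w)‖ := by ring_nf
      _ ≤ ‖z - w‖ + ‖w - conj w‖ := norm_add_le _ _
      _ = ‖z - w‖ + 2 * w.im := by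
        rw [Complex.sub_conj, norm_mul, Complex.norm_I, Complex.norm_real, mul_one,
          Real.norm_of_nonneg (by positivity)]
  calc 1 + 2 * (w.im / w.re) = 1 - 2 * w.im / -w.re := by rw [div_neg, mul_div_assoc]; ring
    _ ≤ 1 - 2 * w.im / ‖z - conj w‖ := by gcongr; linarith
    _ ≤ ‖z - w‖ / ‖z - conj w‖ := by rw [le_div_iff₀ hden]; field_simp; linarith
    _ = pseudoHyperbolicDist z w := by rw [pseudoHyperbolicDist, halfPlaneToDisk, norm_div]

theorem tendsto_pseudoHyperbolicDist_one_of_tendsto_arg {z w : ℕ → ℂ}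
    (hz : ∀ n, 0 < (z n).im) (hw : ∀ n, 0 < (w n).im)
    (hz_arg : Tendsto (fun n => (z n).arg) atTop (𝓝 0))
    (hw_arg : Tendsto (fun n => (w n).arg) atTop (𝓝 π)) :
    Tendsto (fun n => pseudoHyperbolicDist (z n) (w n)) atTop (𝓝 1) := by
  have hz_re : ∀ᶠ n in atTop, 0 ≤ (z n).re := by
    filter_upwards [hz_arg.abs.eventually (gt_mem_nhds (show |(0 : ℝ)| < π / 2 by simpa using pi_div_two_pos))]
      with n hn
    rcases Complex.abs_arg_lt_pi_div_two_iff.1 hn with h | h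
    · exact h.le
    · simp [h]
  have hw_re : ∀ᶠ n in atTop, (w n).re < 0 := by
    filter_upwards [hw_arg.eventually (lt_mem_nhds (by linarith [pi_pos] : π / 2 < π))]
      with n hn
    by_contra! h
    exact hn.not_ge (Complex.arg_le_pi_div_two_iff.2 (Or.inl h))
  have h_tan : Tendsto (fun n => 1 + 2 * ((w n).im / (w n).re)) atTop (𝓝 1) := by
    simp_rw [← Complex.tan_arg]
    have := (continuousAt_tan.2 (by simp [cos_pi])).tendsto.comp hw_arg
    simpa [tan_pi] using (this.const_mul 2).const_add 1
  refine tendsto_of_tendsto_of_tendsto_of_le_of_le' h_tan tendsto_const_nhds ?_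
    (Eventually.of_forall fun n => (pseudoHyperbolicDist_lt_one (hz n) (hw n)).le)
  filter_upwards [hz_re, hw_re] with n hzn hwn
  exact one_add_two_mul_im_div_re_le_pseudoHyperbolicDist (hz n) (hw n) hzn hwn

section

variable {f : ℂ → ℂ} {z w : ℂ}

theorem not_tendsto_arg_iterate_zero_and_pi (hf : DifferentiableOn ℂ f {z | 0 < z.im})
    (hmaps : MapsTo f {z | 0 < z.im} {z | 0 < z.im}) (hz : 0 < z.im) (hw : 0 < w.im)
    (hz_arg : Tendsto (fun n => (f^[n] z).arg) atTop (𝓝 0))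
    (hw_arg : Tendsto (fun n => (f^[n] w).arg) atTop (𝓝 π)) : False :=
  (pseudoHyperbolicDist_lt_one hz hw).not_ge <|
    le_of_tendsto' (tendsto_pseudoHyperbolicDist_one_of_tendsto_arg
      (hmaps.iterate · hz) (hmaps.iterate · hw) hz_arg hw_arg)
      (pseudoHyperbolicDist_iterate_le hf hmaps hz hw)

theorem arg_iterate_limit_eq_of_mem_zero_pi (hf : DifferentiableOn ℂ f {z | 0 < z.im})
    (hmaps : MapsTo f {z | 0 < z.im} {z | 0 < z.im}) (hz : 0 < z.im) (hw : 0 < w.im)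
    {s t : ℝ} (hs : s ∈ ({0, π} : Set ℝ)) (ht : t ∈ ({0, π} : Set ℝ))
    (hz_arg : Tendsto (fun n => (f^[n] z).arg) atTop (𝓝 s))
    (hw_arg : Tendsto (fun n => (f^[n] w).arg) atTop (𝓝 t)) : s = t := by
  rcases hs with rfl | rfl <;> rcases ht with rfl | rfl
  · rfl
  · exact (not_tendsto_arg_iterate_zero_and_pi hf hmaps hz hw hz_arg hw_arg).elim
  · exact (not_tendsto_arg_iterate_zero_and_pi hf hmaps hw hz hw_arg hz_arg).elim
  · rfl

end

theorem slope_zero_or_pi_independent_of_point_general (f : ℂ → ℂ)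
    (hf : DifferentiableOn ℂ f {z : ℂ | 0 < z.im})
    (hmaps : Set.MapsTo f {z : ℂ | 0 < z.im} {z : ℂ | 0 < z.im})
    (harg : ∀ z : ℂ, 0 < z.im → ∃ s ∈ ({0, Real.pi} : Set ℝ),
      Tendsto (fun n => (f^[n] z).arg) atTop (nhds s)) :
    (∀ z : ℂ, 0 < z.im → Tendsto (fun n => (f^[n] z).arg) atTop (nhds 0)) ∨
      (∀ z : ℂ, 0 < z.im → Tendsto (fun n => (f^[n] z).arg) atTop (nhds Real.pi)) := by
  obtain ⟨s, hs, hI⟩ := harg Complex.I (by simp)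
  have h_all : ∀ z : ℂ, 0 < z.im → Tendsto (fun n => (f^[n] z).arg) atTop (𝓝 s) := by
    intro z hz
    obtain ⟨t, ht, hz_arg⟩ := harg z hz
    rwa [← arg_iterate_limit_eq_of_mem_zero_pi hf hmaps hz (by simp) ht hs hz_arg hI]
  rcases hs with rfl | rfl
  exacts [Or.inl h_all, Or.inr h_all]

/-- If `f` is a holomorphic self-map of the upper half-plane such that every
orbit tends to `∞` in modulus with argument converging to either `0` or `π`, then the
limit value of the argument is the same (`0` for all points, or `π` for all points). -/
theorem slope_zero_or_pi_independent_of_point (f : ℂ → ℂ)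
    (hf : DifferentiableOn ℂ f {z : ℂ | 0 < z.im})
    (hmaps : Set.MapsTo f {z : ℂ | 0 < z.im} {z : ℂ | 0 < z.im})
    (habs : ∀ z : ℂ, 0 < z.im → Tendsto (fun n => ‖f^[n] z‖) atTop atTop)
    (harg : ∀ z : ℂ, 0 < z.im → ∃ s ∈ ({0, Real.pi} : Set ℝ),
      Tendsto (fun n => (f^[n] z).arg) atTop (nhds s)) :
    (∀ z : ℂ, 0 < z.im → Tendsto (fun n => (f^[n] z).arg) atTop (nhds 0)) ∨
      (∀ z : ℂ, 0 < z.im → Tendsto (fun n => (f^[n] z).arg) atTop (nhds Real.pi)) :=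
  slope_zero_or_pi_independent_of_point_general f hf hmaps harg
end

section
/- Let f : ℍ → ℍ be holomorphic and let z₀ ∈ ℍ be such that |f^[n](z₀)| → ∞ and f^[n+1](z₀)/f^[n](z₀) → 1 as n → ∞. Then there exist real numbers a, b with 0 ≤ a ≤ b ≤ π such that Slope[f, z₀], the set of limit points of arg(f^[n](z₀)), equals the closed interval [a, b]. -/
open Filter Topology Set

/-!
All `z_n = f^[n] z₀` lie in `ℍ`, where `arg` takes values in `(0, π)`, so `arg z_{n+1} - arg z_n`
is exactly `arg (z_{n+1} / z_n)`, which tends to `arg 1 = 0`. A bounded real sequence whose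
steps tend to `0` cannot jump over a value lying between two of its cluster points, so its set
of cluster points is a compact connected subset of `[0, π]`, i.e. a closed interval.
-/

theorem mapClusterPt_atTop_iff_exists_strictMono {X : Type*} [TopologicalSpace X]
    [FirstCountableTopology X] {u : ℕ → X} {x : X} :
    MapClusterPt x atTop u ↔ ∃ φ : ℕ → ℕ, StrictMono φ ∧ Tendsto (u ∘ φ) atTop (𝓝 x) :=
  ⟨MapClusterPt.tendsto_subseq, fun ⟨_, hφ, hx⟩ => hx.mapClusterPt.of_comp hφ.tendsto_atTop⟩

theorem exists_abs_sub_lt_of_lt_of_le {u : ℕ → ℝ} {c ε : ℝ} {m m' : ℕ} (hmm' : m ≤ m')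
    (hm : u m < c) (hm' : c ≤ u m') (hstep : ∀ n ≥ m, |u (n + 1) - u n| < ε) :
    ∃ n ≥ m, |u n - c| < ε := by
  induction m', hmm' using Nat.le_induction with
  | base => exact absurd hm' hm.not_ge
  | succ k hmk ih =>
    by_cases hk : c ≤ u k
    · exact ih hk
    · obtain ⟨hstep_lo, hstep_hi⟩ := abs_lt.1 (hstep k hmk)
      exact ⟨k + 1, by omega, abs_lt.2 ⟨by linarith, by linarith⟩⟩

theorem ordConnected_setOf_mapClusterPt {u : ℕ → ℝ}
    (hstep : Tendsto (fun n => u (n + 1) - u n) atTop (𝓝 0)) :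
    OrdConnected {x | MapClusterPt x atTop u} := by
  refine ⟨fun p hp q hq c ⟨hpc, hcq⟩ => ?_⟩
  rcases hpc.eq_or_lt with rfl | hpc
  · exact hp
  rcases hcq.eq_or_lt with rfl | hcq
  · exact hq
  have hbelow : ∃ᶠ n in atTop, u n < c := hp.frequently (Iio_mem_nhds hpc)
  have habove : ∃ᶠ n in atTop, c < u n := hq.frequently (Ioi_mem_nhds hcq)
  refine (Metric.nhds_basis_ball.mapClusterPt_iff_frequently).2 fun ε hε => ?_
  obtain ⟨M, hM⟩ := eventually_atTop.1 (hstep.eventually (eventually_abs_sub_lt 0 hε))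
  refine frequently_atTop.2 fun N => ?_
  obtain ⟨m, hm, hmc⟩ := frequently_atTop.1 hbelow (max N M)
  obtain ⟨m', hmm', hcm'⟩ := frequently_atTop.1 habove m
  obtain ⟨n, hn, hnc⟩ := exists_abs_sub_lt_of_lt_of_le hmm' hmc hcm'.le fun n hn => by
    simpa using hM n (by omega)
  exact ⟨n, by omega, hnc⟩

theorem exists_setOf_mapClusterPt_eq_Icc {u : ℕ → ℝ} {p q : ℝ} (hu : ∀ n, u n ∈ Icc p q)
    (hstep : Tendsto (fun n => u (n + 1) - u n) atTop (𝓝 0)) :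
    ∃ a b, p ≤ a ∧ a ≤ b ∧ b ≤ q ∧ {x | MapClusterPt x atTop u} = Icc a b := by
  set S := {x | MapClusterPt x atTop u}
  have hsub : S ⊆ Icc p q := fun x hx =>
    isClosed_Icc.mem_of_mapClusterPt hx (Eventually.of_forall hu)
  have hcompact : IsCompact S :=
    isCompact_Icc.of_isClosed_subset isClosed_setOfPred_clusterPt hsub
  have hne : S.Nonempty := by
    obtain ⟨x, -, hx⟩ :=
      isCompact_Icc.exists_mapClusterPt_of_frequently (l := atTop) (Frequently.of_forall hu)
    exact ⟨x, hx⟩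
  have hconn : IsConnected S :=
    ⟨hne, isPreconnected_iff_ordConnected.2 (ordConnected_setOf_mapClusterPt hstep)⟩
  exact ⟨sInf S, sSup S, le_csInf hne fun x hx => (hsub hx).1,
    csInf_le_csSup hne hcompact.bddBelow hcompact.bddAbove,
    csSup_le hne fun x hx => (hsub hx).2, eq_Icc_of_connected_compact hconn hcompact⟩

namespace Complex

theorem arg_mem_Icc_of_im_pos {z : ℂ} (hz : 0 < z.im) : arg z ∈ Icc 0 Real.pi :=
  ⟨arg_nonneg_iff.2 hz.le, arg_le_pi z⟩

theorem arg_div_of_im_pos {z w : ℂ} (hz : 0 < z.im) (hw : 0 < w.im) :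
    arg (w / z) = arg w - arg z := by
  have hz0 : z ≠ 0 := fun h => hz.ne' (by simp [h])
  have hw0 : w ≠ 0 := fun h => hw.ne' (by simp [h])
  have hzπ : arg z < Real.pi := arg_lt_pi_iff.2 (Or.inr hz.ne')
  rw [← arg_coe_angle_toReal_eq_arg, arg_div_coe_angle hw0 hz0, ← Real.Angle.coe_sub,
    Real.Angle.toReal_coe_eq_self_iff]
  obtain ⟨hz_nonneg, -⟩ := arg_mem_Icc_of_im_pos hz
  obtain ⟨hw_nonneg, hw_le⟩ := arg_mem_Icc_of_im_pos hw
  constructor <;> linarith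

theorem tendsto_arg_sub_of_tendsto_div {z : ℕ → ℂ} (hz : ∀ n, 0 < (z n).im)
    (hdiv : Tendsto (fun n => z (n + 1) / z n) atTop (𝓝 1)) :
    Tendsto (fun n => arg (z (n + 1)) - arg (z n)) atTop (𝓝 0) := by
  have harg : Tendsto (fun n => arg (z (n + 1) / z n)) atTop (𝓝 0) := by
    rw [← arg_one]
    exact (continuousAt_arg one_mem_slitPlane).tendsto.comp hdiv
  simpa only [arg_div_of_im_pos (hz _) (hz _)] using harg

end Complex

theorem slope_set_eq_Icc_general (f : ℂ → ℂ)
    (hmaps : Set.MapsTo f {z : ℂ | 0 < z.im} {z : ℂ | 0 < z.im})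
    (z₀ : ℂ) (hz₀ : 0 < z₀.im)
    (hratio : Tendsto (fun n => f^[n + 1] z₀ / f^[n] z₀) atTop (nhds 1)) :
    ∃ a b : ℝ, 0 ≤ a ∧ a ≤ b ∧ b ≤ Real.pi ∧
      {s : ℝ | ∃ φ : ℕ → ℕ, StrictMono φ ∧
        Tendsto (fun k => (f^[φ k] z₀).arg) atTop (nhds s)} = Set.Icc a b := by
  have him : ∀ n, 0 < (f^[n] z₀).im := fun n => hmaps.iterate n hz₀
  obtain ⟨a, b, ha, hab, hb, hS⟩ := exists_setOf_mapClusterPt_eq_Icc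
    (fun n => Complex.arg_mem_Icc_of_im_pos (him n))
    (Complex.tendsto_arg_sub_of_tendsto_div (z := fun n => f^[n] z₀) him hratio)
  refine ⟨a, b, ha, hab, hb, ?_⟩
  rw [← hS]
  exact Set.ext fun s =>
    (mapClusterPt_atTop_iff_exists_strictMono (u := fun n => (f^[n] z₀).arg)).symm

/-- If `f` is a holomorphic self-map of the upper half-plane, `z₀` is a
point whose orbit tends to `∞` in modulus and satisfies `z_{n+1}/z_n → 1` (as is the
case for parabolic maps with Denjoy-Wolff point `∞`, by Pommerenke's theorem), then
`Slope[f, z₀]`, the set of limit points of `arg (f^[n] z₀)`, is a closed interval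
`[a, b]` with `0 ≤ a ≤ b ≤ π`. -/
theorem slope_set_eq_Icc (f : ℂ → ℂ)
    (hf : DifferentiableOn ℂ f {z : ℂ | 0 < z.im})
    (hmaps : Set.MapsTo f {z : ℂ | 0 < z.im} {z : ℂ | 0 < z.im})
    (z₀ : ℂ) (hz₀ : 0 < z₀.im)
    (habs : Tendsto (fun n => ‖f^[n] z₀‖) atTop atTop)
    (hratio : Tendsto (fun n => f^[n + 1] z₀ / f^[n] z₀) atTop (nhds 1)) :
    ∃ a b : ℝ, 0 ≤ a ∧ a ≤ b ∧ b ≤ Real.pi ∧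
      {s : ℝ | ∃ φ : ℕ → ℕ, StrictMono φ ∧
        Tendsto (fun k => (f^[φ k] z₀).arg) atTop (nhds s)} = Set.Icc a b :=
  slope_set_eq_Icc_general f hmaps z₀ hz₀ hratio
end

section
/- Let μ be a finite positive Borel measure on ℝ with ∫_ℝ |t| dμ(t) < ∞, and define p(z) = ∫_ℝ (1+t²)/(t−z) dμ(t) for z ∈ ℍ. Then p(z) → 0 as z → ∞ non-tangentially: for every δ ∈ (0, π/2) and every ε > 0 there exists R > 0 such that |p(z)| ≤ ε whenever z ∈ ℍ, |z| ≥ R and δ ≤ arg(z) ≤ π − δ. -/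
open Filter Topology MeasureTheory

/-!
For `z` in the sector `δ ≤ arg z ≤ π - δ` and real `t`, the distance `‖t - z‖` is at least
`sin δ * max |t| ‖z‖`. Hence, once `‖z‖ ≥ 1`, the integrand `(1 + t²) / (t - z)` is dominated by
`2 / sin δ * (1 + |t|)`, which is `μ`-integrable, and it tends to `0` pointwise as `z → ∞`.
Dominated convergence along the filter `cobounded ℂ ⊓ 𝓟 sector` gives the claim.
-/

open Real Bornology

lemma Real.sin_le_sin_of_le_of_le_pi_sub {δ x : ℝ} (hδ₀ : -(π / 2) ≤ δ) (h₁ : δ ≤ x)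
    (h₂ : x ≤ π - δ) : sin δ ≤ sin x := by
  rcases le_total x (π / 2) with hx | hx
  · exact sin_le_sin_of_le_of_le_pi_div_two hδ₀ hx h₁
  · rw [← sin_pi_sub x]
    exact sin_le_sin_of_le_of_le_pi_div_two hδ₀ (by linarith) (by linarith)

namespace Complex

lemma sin_mul_norm_le_im {δ : ℝ} {z : ℂ} (hδ₀ : -(π / 2) ≤ δ) (h₁ : δ ≤ z.arg)
    (h₂ : z.arg ≤ π - δ) : Real.sin δ * ‖z‖ ≤ z.im := by
  rw [← norm_mul_sin_arg, mul_comm]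
  exact mul_le_mul_of_nonneg_left (sin_le_sin_of_le_of_le_pi_sub hδ₀ h₁ h₂) (norm_nonneg z)

lemma mul_abs_le_norm_ofReal_sub {s : ℝ} {z : ℂ} (hz : s * ‖z‖ ≤ z.im) (hz₀ : z ≠ 0) (t : ℝ) :
    s * |t| ≤ ‖(t : ℂ) - z‖ := by
  -- `|t| * z.im / ‖z‖` is the distance from `t` to the line `ℝ z`.
  have him : ((t - z) * (starRingEnd ℂ) z).im = -(t * z.im) := by simp; ring
  have key : |t| * z.im ≤ ‖(t : ℂ) - z‖ * ‖z‖ := by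
    calc |t| * z.im ≤ |t * z.im| := by rw [abs_mul]; gcongr; exact le_abs_self _
      _ = |((t - z) * (starRingEnd ℂ) z).im| := by rw [him, abs_neg]
      _ ≤ ‖(t : ℂ) - z‖ * ‖z‖ := by
        simpa only [norm_mul, norm_conj] using abs_im_le_norm ((t - z) * (starRingEnd ℂ) z)
  have hz_pos : 0 < ‖z‖ := norm_pos_iff.mpr hz₀
  nlinarith [abs_nonneg t]

lemma mul_norm_le_norm_ofReal_sub {s : ℝ} {z : ℂ} (hz : s * ‖z‖ ≤ z.im) (t : ℝ) :
    s * ‖z‖ ≤ ‖(t : ℂ) - z‖ :=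
  calc s * ‖z‖ ≤ z.im := hz
    _ ≤ |((t : ℂ) - z).im| := by rw [sub_im, ofReal_im, zero_sub, abs_neg]; exact le_abs_self _
    _ ≤ ‖(t : ℂ) - z‖ := abs_im_le_norm _

lemma norm_one_add_sq_div_ofReal_sub_le {s : ℝ} {z : ℂ} (hs : 0 < s) (hz : s * ‖z‖ ≤ z.im)
    (hz₁ : 1 ≤ ‖z‖) (t : ℝ) : ‖(1 + (t : ℂ) ^ 2) / (t - z)‖ ≤ 2 / s * (1 + |t|) := by
  have h₁ := mul_abs_le_norm_ofReal_sub hz (norm_pos_iff.mp (by linarith)) t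
  have h₂ := mul_norm_le_norm_ofReal_sub hz t
  have hnum : ‖1 + (t : ℂ) ^ 2‖ = 1 + t ^ 2 := by
    norm_cast; rw [Real.norm_of_nonneg (by positivity)]
  have hden : s * (1 + |t|) / 2 ≤ ‖(t : ℂ) - z‖ := by nlinarith
  rw [norm_div, hnum, div_le_iff₀ (by nlinarith [abs_nonneg t])]
  calc 1 + t ^ 2 ≤ 2 / s * (1 + |t|) * (s * (1 + |t|) / 2) := by
        field_simp; nlinarith [sq_abs t, abs_nonneg t]
    _ ≤ 2 / s * (1 + |t|) * ‖(t : ℂ) - z‖ := by gcongr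

end Complex

theorem tendsto_integral_one_add_sq_div_ofReal_sub {μ : Measure ℝ} [IsFiniteMeasure μ]
    (hμ : Integrable (fun t : ℝ => |t|) μ) {δ : ℝ} (hδ₀ : 0 < δ) (hδ : δ < π) :
    Tendsto (fun z : ℂ => ∫ t : ℝ, (1 + (t : ℂ) ^ 2) / ((t : ℂ) - z) ∂μ)
      (cobounded ℂ ⊓ 𝓟 {z | δ ≤ z.arg ∧ z.arg ≤ π - δ}) (𝓝 0) := by
  have hs : 0 < sin δ := sin_pos_of_pos_of_lt_pi hδ₀ hδ
  set S := {z : ℂ | δ ≤ z.arg ∧ z.arg ≤ π - δ}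
  have hcg : (cobounded ℂ ⊓ 𝓟 S).IsCountablyGenerated := by
    rw [← comap_norm_atTop]; infer_instance
  have hbound : ∀ᶠ z in cobounded ℂ ⊓ 𝓟 S,
      ∀ t : ℝ, ‖(1 + (t : ℂ) ^ 2) / ((t : ℂ) - z)‖ ≤ 2 / sin δ * (1 + |t|) := by
    filter_upwards [(eventually_cobounded_le_norm 1).filter_mono inf_le_left,
      mem_inf_of_right (mem_principal_self S)] with z hz₁ ⟨h₁, h₂⟩
    exact Complex.norm_one_add_sq_div_ofReal_sub_le hs
      (Complex.sin_mul_norm_le_im (by linarith) h₁ h₂) hz₁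
  have hlim (t : ℝ) :
      Tendsto (fun z : ℂ => (1 + (t : ℂ) ^ 2) / ((t : ℂ) - z)) (cobounded ℂ) (𝓝 0) := by
    simpa [div_eq_mul_inv] using
      (tendsto_inv₀_cobounded.comp (tendsto_const_sub_cobounded (t : ℂ))).const_mul
        (1 + (t : ℂ) ^ 2)
  simpa using tendsto_integral_filter_of_dominated_convergence _
    (Eventually.of_forall fun z => (by fun_prop : Measurable
      fun t : ℝ => (1 + (t : ℂ) ^ 2) / ((t : ℂ) - z)).aestronglyMeasurable)
    (hbound.mono fun _ hz => ae_of_all _ hz) (((integrable_const 1).add hμ).const_mul _)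
    (ae_of_all _ fun t => (hlim t).mono_left inf_le_left)

/-- If `μ` is a finite positive Borel measure on `ℝ` with `∫ |t| dμ < ∞`,
then `p(z) = ∫ (1+t²)/(t-z) dμ(t)` tends to `0` as `z → ∞` non-tangentially in the
upper half-plane. -/
theorem integral_tendsto_zero_nontangentially (μ : Measure ℝ) [IsFiniteMeasure μ]
    (hμ : Integrable (fun t : ℝ => |t|) μ) :
    ∀ δ : ℝ, 0 < δ → δ < Real.pi / 2 → ∀ ε : ℝ, 0 < ε → ∃ R : ℝ, 0 < R ∧
      ∀ z : ℂ, 0 < z.im → R ≤ ‖z‖ → δ ≤ z.arg → z.arg ≤ Real.pi - δ →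
        ‖∫ t : ℝ, (1 + (t : ℂ) ^ 2) / ((t : ℂ) - z) ∂μ‖ ≤ ε := by
  intro δ hδ₀ hδ ε hε
  have h := (tendsto_integral_one_add_sq_div_ofReal_sub hμ hδ₀ (by linarith [pi_pos])).eventually
    (Metric.closedBall_mem_nhds 0 hε)
  rw [eventually_inf_principal, ← comap_norm_atTop, eventually_comap, eventually_atTop] at h
  obtain ⟨R, hR⟩ := h
  refine ⟨max R 1, by positivity, fun z _ hz h₁ h₂ => ?_⟩
  simpa using hR ‖z‖ (le_of_max_le_left hz) z rfl ⟨h₁, h₂⟩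
end

section
/- Let μ be a finite positive Borel measure on ℝ with ∫_ℝ t² dμ(t) < ∞, and define p(z) = ∫_ℝ (1+t²)/(t−z) dμ(t) for z ∈ ℍ. Then z·p(z) → −∫_ℝ (1+t²) dμ(t) as z → ∞ non-tangentially: for every δ ∈ (0, π/2) and every ε > 0 there exists R > 0 such that |z·p(z) + ∫_ℝ (1+t²) dμ(t)| ≤ ε whenever z ∈ ℍ, |z| ≥ R and δ ≤ arg(z) ≤ π − δ. -/
/-!
Since `z / (t - z) = t / (t - z) - 1`, we have `z p(z) + ∫ (1 + t²) dμ = ∫ t / (t - z) (1 + t²) dμ`.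
For real `t`, the distance from `t` to the ray through `z` is `|t| sin (arg z)`, so on the sector
`δ ≤ arg z ≤ π - δ` the factor `t / (t - z)` is bounded by `1 / sin δ`; it also tends to `0`
pointwise as `z → ∞`. Dominated convergence finishes the proof.
-/

open Filter Topology MeasureTheory Bornology

namespace Complex

lemma abs_im_le_norm_ofReal_sub (t : ℝ) (z : ℂ) : |z.im| ≤ ‖(t : ℂ) - z‖ := by
  simpa using abs_im_le_norm ((t : ℂ) - z)

lemma norm_ofReal_sub_pos {z : ℂ} (hz : z.im ≠ 0) (t : ℝ) : 0 < ‖(t : ℂ) - z‖ :=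
  (abs_pos.2 hz).trans_le (abs_im_le_norm_ofReal_sub t z)

lemma ofReal_sub_ne_zero {z : ℂ} (hz : z.im ≠ 0) (t : ℝ) : (t : ℂ) - z ≠ 0 :=
  norm_pos_iff.1 (norm_ofReal_sub_pos hz t)

lemma abs_mul_abs_im_le_norm_ofReal_sub_mul_norm (t : ℝ) (z : ℂ) :
    |t| * |z.im| ≤ ‖(t : ℂ) - z‖ * ‖z‖ := by
  refine (pow_le_pow_iff_left₀ (by positivity) (by positivity) two_ne_zero).1 ?_
  rw [mul_pow, mul_pow, sq_abs, sq_abs, Complex.sq_norm, Complex.sq_norm, normSq_apply,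
    normSq_apply]
  simp only [sub_re, sub_im, ofReal_re, ofReal_im, zero_sub]
  -- the difference of the two sides is `(t * re z - ‖z‖²)²`
  nlinarith [sq_nonneg (t * z.re - (z.re ^ 2 + z.im ^ 2))]

def nontangentialSector (δ : ℝ) : Set ℂ :=
  {z | 0 < z.im ∧ δ ≤ z.arg ∧ z.arg ≤ Real.pi - δ}

variable {δ : ℝ} {z : ℂ}

lemma sin_mul_norm_le_im_s8 (hδ : 0 ≤ δ) (hz : z ∈ nontangentialSector δ) :
    Real.sin δ * ‖z‖ ≤ z.im := by
  obtain ⟨-, hδz, hzδ⟩ := hz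
  have hsin : Real.sin δ ≤ Real.sin z.arg := by
    rcases le_total z.arg (Real.pi / 2) with h | h
    · exact Real.sin_le_sin_of_le_of_le_pi_div_two (by linarith) h hδz
    · rw [← Real.sin_pi_sub z.arg]
      exact Real.sin_le_sin_of_le_of_le_pi_div_two (by linarith) (by linarith) (by linarith)
  calc Real.sin δ * ‖z‖ ≤ Real.sin z.arg * ‖z‖ := by gcongr
    _ = z.im := by rw [mul_comm, norm_mul_sin_arg]

lemma abs_mul_sin_le_norm_ofReal_sub (hδ : 0 ≤ δ) (hz : z ∈ nontangentialSector δ) (t : ℝ) :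
    |t| * Real.sin δ ≤ ‖(t : ℂ) - z‖ := by
  have hz0 : 0 < ‖z‖ := hz.1.trans_le (im_le_norm z)
  refine le_of_mul_le_mul_right ?_ hz0
  calc |t| * Real.sin δ * ‖z‖ ≤ |t| * |z.im| := by
        rw [mul_assoc]; gcongr; exact (sin_mul_norm_le_im_s8 hδ hz).trans (le_abs_self _)
    _ ≤ ‖(t : ℂ) - z‖ * ‖z‖ := abs_mul_abs_im_le_norm_ofReal_sub_mul_norm t z

lemma norm_ofReal_div_ofReal_sub_le (hδ : 0 < δ) (hz : z ∈ nontangentialSector δ) (t : ℝ) :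
    ‖(t : ℂ) / ((t : ℂ) - z)‖ ≤ (Real.sin δ)⁻¹ := by
  have hsin : 0 < Real.sin δ :=
    Real.sin_pos_of_pos_of_lt_pi hδ (by linarith [hz.2.1, hz.2.2, Real.pi_pos])
  rw [norm_div, norm_real, Real.norm_eq_abs, div_le_iff₀ (norm_ofReal_sub_pos hz.1.ne' t),
    ← div_eq_inv_mul, le_div_iff₀ hsin]
  exact abs_mul_sin_le_norm_ofReal_sub hδ.le hz t

variable {μ : Measure ℝ} {f : ℝ → ℂ}

lemma integrable_div_ofReal_sub (hf : Integrable f μ) (hz : z.im ≠ 0) :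
    Integrable (fun t : ℝ => f t / ((t : ℂ) - z)) μ := by
  simp_rw [div_eq_inv_mul]
  refine hf.bdd_mul (c := |z.im|⁻¹)
    ((continuous_ofReal.sub continuous_const).inv₀ (ofReal_sub_ne_zero hz)).aestronglyMeasurable
    (ae_of_all _ fun t => ?_)
  rw [norm_inv]
  exact inv_anti₀ (abs_pos.2 hz) (abs_im_le_norm_ofReal_sub t z)

lemma mul_integral_div_ofReal_sub_add_integral (hf : Integrable f μ) (hz : z.im ≠ 0) :
    z * ∫ t, f t / ((t : ℂ) - z) ∂μ + ∫ t, f t ∂μ = ∫ t, (t : ℂ) / ((t : ℂ) - z) * f t ∂μ := by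
  rw [← integral_const_mul, ← integral_add ((integrable_div_ofReal_sub hf hz).const_mul z) hf]
  congr 1 with t
  have := ofReal_sub_ne_zero hz t
  field_simp
  ring

theorem tendsto_integral_ofReal_div_ofReal_sub_mul (hf : Integrable f μ) (hδ : 0 < δ) :
    Tendsto (fun z : ℂ => ∫ t, (t : ℂ) / ((t : ℂ) - z) * f t ∂μ)
      (cobounded ℂ ⊓ 𝓟 (nontangentialSector δ)) (𝓝 0) := by
  have : (cobounded ℂ).IsCountablyGenerated := by rw [← comap_norm_atTop]; infer_instance
  have hsector : ∀ᶠ z in cobounded ℂ ⊓ 𝓟 (nontangentialSector δ), z ∈ nontangentialSector δ :=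
    eventually_inf_principal.2 (.of_forall fun _ => id)
  rw [← integral_zero ℝ ℂ (μ := μ)]
  refine tendsto_integral_filter_of_dominated_convergence (fun t => (Real.sin δ)⁻¹ * ‖f t‖)
    (hsector.mono fun z hz => ?_) (hsector.mono fun z hz => ae_of_all _ fun t => ?_)
    (hf.norm.const_mul _) (ae_of_all _ fun t => ?_)
  · exact (continuous_ofReal.div (continuous_ofReal.sub continuous_const)
      (ofReal_sub_ne_zero hz.1.ne')).aestronglyMeasurable.mul hf.1
  · rw [norm_mul]
    exact mul_le_mul_of_nonneg_right (norm_ofReal_div_ofReal_sub_le hδ hz t) (norm_nonneg _)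
  · refine Tendsto.mono_left ?_ inf_le_left
    have h := tendsto_inv₀_cobounded.comp (tendsto_const_sub_cobounded (t : ℂ))
    simpa [div_eq_mul_inv] using (h.const_mul (t : ℂ)).mul_const (f t)

theorem tendsto_mul_integral_div_ofReal_sub (hf : Integrable f μ) (hδ : 0 < δ) :
    Tendsto (fun z : ℂ => z * ∫ t, f t / ((t : ℂ) - z) ∂μ)
      (cobounded ℂ ⊓ 𝓟 (nontangentialSector δ)) (𝓝 (-∫ t, f t ∂μ)) := by
  have h := (tendsto_integral_ofReal_div_ofReal_sub_mul hf hδ).sub_const (∫ t, f t ∂μ)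
  rw [zero_sub] at h
  refine h.congr' (eventually_inf_principal.2 (.of_forall fun z hz => ?_))
  rw [← mul_integral_div_ofReal_sub_add_integral hf hz.1.ne', add_sub_cancel_right]

end Complex

/-- If `μ` is a finite positive Borel measure on `ℝ` with `∫ t² dμ < ∞`,
then `z·p(z) → -∫ (1+t²) dμ(t)` as `z → ∞` non-tangentially in the upper half-plane,
where `p(z) = ∫ (1+t²)/(t-z) dμ(t)`. -/
theorem mul_integral_tendsto_nontangentially (μ : Measure ℝ) [IsFiniteMeasure μ]
    (hμ : Integrable (fun t : ℝ => t ^ 2) μ) :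
    ∀ δ : ℝ, 0 < δ → δ < Real.pi / 2 → ∀ ε : ℝ, 0 < ε → ∃ R : ℝ, 0 < R ∧
      ∀ z : ℂ, 0 < z.im → R ≤ ‖z‖ → δ ≤ z.arg → z.arg ≤ Real.pi - δ →
        ‖z * (∫ t : ℝ, (1 + (t : ℂ) ^ 2) / ((t : ℂ) - z) ∂μ) +
          ((∫ t : ℝ, (1 + t ^ 2) ∂μ : ℝ) : ℂ)‖ ≤ ε := by
  intro δ hδ _ ε hε
  have hf : Integrable (fun t : ℝ => 1 + (t : ℂ) ^ 2) μ := by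
    simpa using ((integrable_const 1).add hμ).ofReal (𝕜 := ℂ)
  have hI : ((∫ t : ℝ, (1 + t ^ 2) ∂μ : ℝ) : ℂ) = ∫ t : ℝ, (1 + (t : ℂ) ^ 2) ∂μ := by
    rw [← integral_complex_ofReal]
    push_cast
    rfl
  obtain ⟨R, -, hR⟩ := (hasBasis_cobounded_norm.inf_principal _).eventually_iff.1
    ((Complex.tendsto_mul_integral_div_ofReal_sub hf hδ).eventually
      (Metric.closedBall_mem_nhds _ hε))
  refine ⟨max R 1, by positivity, fun z hz hRz hδz hzδ => ?_⟩
  have hzR := hR ⟨(le_max_left R 1).trans hRz, hz, hδz, hzδ⟩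
  rwa [dist_eq_norm, sub_neg_eq_add, ← hI] at hzR
end

section
/- Let μ be a finite positive Borel measure on ℝ with ∫_ℝ |t| dμ(t) < ∞, and define p(z) = ∫_ℝ (1+t²)/(t−z) dμ(t) for z ∈ ℍ. Then for every L > 0, p(z)/z → 0 as z → ∞ in the half-plane {Im z > L}: for every ε > 0 there exists R > 0 such that |p(z)/z| ≤ ε whenever z ∈ ℍ, |z| ≥ R and Im(z) > L. -/
open Filter Topology MeasureTheory

/-!
For `L < Im z` the integrand `(1 + t²) / ((t - z) z)` is bounded by `1 / L² + 2 |t| / L`,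
uniformly in `z`, which is `μ`-integrable; for fixed `t` it is `O(1 / |z|)`. Dominated
convergence along the filter "`z → ∞` with `L < Im z`" gives `p(z) / z → 0`.
-/

lemma im_le_norm_ofReal_sub (z : ℂ) (t : ℝ) : z.im ≤ ‖(t : ℂ) - z‖ := by
  simpa [norm_sub_rev] using Complex.im_le_norm (z - t)

lemma norm_one_add_sq_div_sub_div (z : ℂ) (t : ℝ) :
    ‖(1 + (t : ℂ) ^ 2) / (t - z) / z‖ = (1 + t ^ 2) / (‖(t : ℂ) - z‖ * ‖z‖) := by
  rw [norm_div, norm_div, div_div]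
  norm_cast
  rw [Real.norm_of_nonneg (by positivity)]

lemma norm_one_add_sq_div_sub_div_le_div_norm {L : ℝ} (hL : 0 < L) {z : ℂ} (hz : L < z.im)
    (t : ℝ) : ‖(1 + (t : ℂ) ^ 2) / (t - z) / z‖ ≤ (1 + t ^ 2) / (L * ‖z‖) := by
  have hz0 : 0 < ‖z‖ := hL.trans (hz.trans_le (Complex.im_le_norm z))
  rw [norm_one_add_sq_div_sub_div]
  gcongr
  exact hz.le.trans (im_le_norm_ofReal_sub z t)

lemma norm_one_add_sq_div_sub_div_le_add_abs {L : ℝ} (hL : 0 < L) {z : ℂ} (hz : L < z.im)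
    (t : ℝ) : ‖(1 + (t : ℂ) ^ 2) / (t - z) / z‖ ≤ 1 / L ^ 2 + 2 / L * |t| := by
  set a := ‖z‖
  set b := ‖(t : ℂ) - z‖
  have ha : L ≤ a := hz.le.trans (Complex.im_le_norm z)
  have hb : L ≤ b := hz.le.trans (im_le_norm_ofReal_sub z t)
  have hab : |t| ≤ b + a := by
    simpa [a, b] using norm_sub_le_norm_sub_add_norm_sub (t : ℂ) z 0
  -- `b * a ≥ L * max a b ≥ L * (a + b) / 2`
  have hsq : L ^ 2 ≤ b * a := by nlinarith
  have hlin : L * |t| ≤ 2 * (b * a) := by nlinarith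
  have hba : 0 < b * a := by nlinarith
  rw [norm_one_add_sq_div_sub_div, add_div, ← sq_abs t, sq, mul_div_assoc, mul_comm (2 / L)]
  refine add_le_add (one_div_le_one_div_of_le (by positivity) hsq) ?_
  exact mul_le_mul_of_nonneg_left ((div_le_div_iff₀ hba hL).mpr (by linarith)) (abs_nonneg t)

lemma Filter.Tendsto.exists_forall_norm_le_of_comap_norm_inf_principal {E F : Type*}
    [SeminormedAddCommGroup E] [SeminormedAddCommGroup F] {f : E → F} {s : Set E}
    (h : Tendsto f (comap (‖·‖) atTop ⊓ 𝓟 s) (𝓝 0)) {ε : ℝ} (hε : 0 < ε) :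
    ∃ R, 0 < R ∧ ∀ z ∈ s, R ≤ ‖z‖ → ‖f z‖ ≤ ε := by
  have hev := h.eventually (Metric.closedBall_mem_nhds 0 hε)
  obtain ⟨R, hR⟩ := eventually_atTop.mp (eventually_comap.mp (eventually_inf_principal.mp hev))
  refine ⟨max R 1, one_pos.trans_le (le_max_right R 1), fun z hz hRz => ?_⟩
  simpa using hR _ ((le_max_left R 1).trans hRz) z rfl hz

theorem tendsto_integral_one_add_sq_div_sub_div (μ : Measure ℝ) [IsFiniteMeasure μ]
    (hμ : Integrable (fun t : ℝ => |t|) μ) {L : ℝ} (hL : 0 < L) :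
    Tendsto (fun z : ℂ => (∫ t : ℝ, (1 + (t : ℂ) ^ 2) / ((t : ℂ) - z) ∂μ) / z)
      (comap (‖·‖) atTop ⊓ 𝓟 {z | L < z.im}) (𝓝 0) := by
  simp_rw [← integral_div]
  have hnorm : Tendsto (fun z : ℂ => ‖z‖) (comap (‖·‖) atTop ⊓ 𝓟 {z | L < z.im}) atTop :=
    tendsto_comap.mono_left inf_le_left
  have hhalf : ∀ᶠ z in comap (‖·‖) atTop ⊓ 𝓟 {z : ℂ | L < z.im}, L < z.im :=
    eventually_inf_principal.mpr (Eventually.of_forall fun _ hz => hz)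
  simpa using tendsto_integral_filter_of_dominated_convergence (μ := μ)
    (fun t => 1 / L ^ 2 + 2 / L * |t|)
    (Eventually.of_forall fun z => (by fun_prop : Measurable _).aestronglyMeasurable)
    (hhalf.mono fun z hz => ae_of_all _ (norm_one_add_sq_div_sub_div_le_add_abs hL hz))
    ((integrable_const _).add (hμ.const_mul _))
    (ae_of_all _ fun t => squeeze_zero_norm'
      (hhalf.mono fun z hz => norm_one_add_sq_div_sub_div_le_div_norm hL hz t)
      (tendsto_const_nhds.div_atTop (hnorm.const_mul_atTop hL)))

/-- If `μ` is a finite positive Borel measure on `ℝ` with `∫ |t| dμ < ∞`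
and `p(z) = ∫ (1+t²)/(t-z) dμ(t)`, then for every `L > 0`, `p(z)/z → 0` as `z → ∞` in
the half-plane `{Im z > L}`. -/
theorem integral_div_tendsto_zero_in_halfplane (μ : Measure ℝ) [IsFiniteMeasure μ]
    (hμ : Integrable (fun t : ℝ => |t|) μ) :
    ∀ L : ℝ, 0 < L → ∀ ε : ℝ, 0 < ε → ∃ R : ℝ, 0 < R ∧
      ∀ z : ℂ, L < z.im → R ≤ ‖z‖ →
        ‖(∫ t : ℝ, (1 + (t : ℂ) ^ 2) / ((t : ℂ) - z) ∂μ) / z‖ ≤ ε := fun _ hL _ hε =>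
  (tendsto_integral_one_add_sq_div_sub_div μ hμ hL)
    |>.exists_forall_norm_le_of_comap_norm_inf_principal hε
end

section
/- Let (a_k) ⊂ (0,∞) and (γ_k) ⊂ ℝ∖{0} be sequences satisfying: Σ_k a_k/|γ_k| < ∞; γ_k = (−1)^k |γ_k|, |γ_1| ≥ 1 and 4|γ_k| ≤ |γ_{k+1}| for all k; Σ_{l=1}^{k} a_l ≤ |γ_k|/(4k) and Σ_{l=k+1}^{∞} a_l/|γ_l| ≤ |γ_k|/(8k) for all k; and Σ_{l=1}^{k−1} a_l ≤ a_k/(80k) and Σ_{l=k+1}^{∞} a_l/|γ_l| ≤ a_k/(160 k |γ_k|) for all k. Define f(z) = z + Σ_{k=1}^{∞} a_k/(γ_k − z) on ℍ and set z_n = x_n + i y_n = f^[n](i). Then for every k ∈ ℕ and every n ∈ ℕ with y_n ≤ |γ_k|/k, one has |x_n| ≤ 2|γ_k|. -/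
/-!
Write `z = x + iy`; the map moves `x` by `∑ₗ aₗ (γₗ - x) / |γₗ - z|²` and never decreases `y`,
so `y ≥ 1` along the orbit and it suffices to show that one step preserves `|x| ≤ 2Γ`,
`Γ = |γₖ|`, as long as `y ≤ Γ / k`. Terms with `l ≤ k` move `x` by at most
`∑_{l ≤ k} aₗ ≤ Γ / 4`; for `l > k` we have `|γₗ| ≥ 4Γ ≥ 2|x|`, so the tail moves `x` by at most
`2 ∑_{l > k} aₗ / |γₗ| ≤ Γ / 4`. This settles `|x| ≤ 3Γ / 2`. If `x > 3Γ / 2`, all terms with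
`l ≤ k` pull `x` to the left, and the `k`-th alone by at least `aₖ / (20Γ)` because
`|γₖ - z|² ≤ 10Γ²`; this dominates the tail, so `x` moves left by at most `Γ / 2`. The case
`x < -3Γ / 2` is the mirror image under `γ ↦ -γ`, `x ↦ -x`.
-/

open Finset

noncomputable section

/-- The real part of `b / (g - (x + y i))`. -/
def poleTerm (b g x y : ℝ) : ℝ := b * (g - x) / ((g - x) ^ 2 + y ^ 2)

def reShift (b g : ℕ → ℝ) (x y : ℝ) : ℝ := ∑' l, poleTerm (b l) (g l) x y

def poleMap (b g : ℕ → ℝ) (z : ℂ) : ℂ := z + ∑' l, (b l : ℂ) / ((g l : ℂ) - z)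

end

section PoleTerm

variable {b g x y Γ : ℝ}

theorem abs_poleTerm (hb : 0 ≤ b) :
    |poleTerm b g x y| = b * |g - x| / ((g - x) ^ 2 + y ^ 2) := by
  rw [poleTerm, abs_div, abs_mul, abs_of_nonneg hb,
    abs_of_nonneg (by positivity : (0 : ℝ) ≤ (g - x) ^ 2 + y ^ 2)]

theorem abs_poleTerm_le_div_abs_sub (hb : 0 ≤ b) : |poleTerm b g x y| ≤ b / |g - x| := by
  rcases eq_or_ne (g - x) 0 with h | h
  · simp [poleTerm, h]
  rw [abs_poleTerm hb, div_le_div_iff₀ (by positivity) (abs_pos.2 h)]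
  nlinarith [sq_abs (g - x), mul_nonneg hb (sq_nonneg y), abs_nonneg (g - x)]

theorem abs_poleTerm_le_div (hb : 0 ≤ b) (hy : 0 < y) : |poleTerm b g x y| ≤ b / y := by
  rw [abs_poleTerm hb, div_le_div_iff₀ (by positivity) hy]
  nlinarith [sq_abs (g - x), mul_nonneg hb (sq_nonneg (|g - x| - y)), abs_nonneg (g - x)]

theorem abs_poleTerm_le_two_mul_div_abs (hb : 0 ≤ b) (hΓ : 0 < Γ) (hg : 4 * Γ ≤ |g|)
    (hx : |x| ≤ 2 * Γ) : |poleTerm b g x y| ≤ 2 * (b / |g|) := by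
  have hgx : |g| / 2 ≤ |g - x| := by linarith [abs_sub_abs_le_abs_sub g x]
  calc |poleTerm b g x y| ≤ b / |g - x| := abs_poleTerm_le_div_abs_sub hb
    _ ≤ b / (|g| / 2) := div_le_div_of_nonneg_left hb (by linarith) hgx
    _ = 2 * (b / |g|) := by ring

theorem poleTerm_nonpos (hb : 0 ≤ b) (hgx : g ≤ x) : poleTerm b g x y ≤ 0 :=
  div_nonpos_of_nonpos_of_nonneg (mul_nonpos_of_nonneg_of_nonpos hb (by linarith))
    (by positivity)

theorem poleTerm_le_neg_div (hb : 0 ≤ b) (hg : |g| ≤ Γ) (hx : 3 / 2 * Γ < x) (hx' : x ≤ 2 * Γ)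
    (hy : 0 ≤ y) (hyΓ : y ≤ Γ) : poleTerm b g x y ≤ -(b / (20 * Γ)) := by
  obtain ⟨hg₁, hg₂⟩ := abs_le.1 hg
  have hΓ : 0 < Γ := by linarith
  have hden : (g - x) ^ 2 + y ^ 2 ≤ 10 * Γ ^ 2 := by nlinarith
  rw [poleTerm, ← neg_div, div_le_div_iff₀ (by nlinarith) (by linarith)]
  nlinarith [mul_le_mul_of_nonneg_left hden hb, mul_nonneg hb hΓ.le]

theorem poleTerm_neg_neg : poleTerm b (-g) (-x) y = -poleTerm b g x y := by
  rw [poleTerm, poleTerm, show -g - -x = -(g - x) by ring, neg_sq, mul_neg, neg_div]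

end PoleTerm

section ReShift

variable {b g : ℕ → ℝ} {n j : ℕ} {x y Γ : ℝ}

theorem reShift_neg_neg : reShift b (-g) (-x) y = -reShift b g x y := by
  simp only [reShift, Pi.neg_apply, poleTerm_neg_neg, tsum_neg]

theorem abs_sum_poleTerm_le (s : Finset ℕ) (hb : ∀ l, 0 ≤ b l) (hy : 1 ≤ y) :
    |∑ l ∈ s, poleTerm (b l) (g l) x y| ≤ ∑ l ∈ s, b l := by
  refine (abs_sum_le_sum_abs _ _).trans (sum_le_sum fun l _ => ?_)
  calc _ ≤ b l / y := abs_poleTerm_le_div (hb l) (by linarith)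
    _ ≤ b l := div_le_self (hb l) hy

theorem norm_poleTerm_tail_le (hb : ∀ l, 0 ≤ b l) (hΓ : 0 < Γ)
    (htail : ∀ l, n ≤ l → 4 * Γ ≤ |g l|) (hx : |x| ≤ 2 * Γ) (i : ℕ) :
    ‖poleTerm (b (i + n)) (g (i + n)) x y‖ ≤ 2 * (b (i + n) / |g (i + n)|) :=
  abs_poleTerm_le_two_mul_div_abs (hb _) hΓ (htail _ (Nat.le_add_left n i)) hx

theorem summable_poleTerm (hb : ∀ l, 0 ≤ b l) (hs : Summable fun l => b l / |g l|)
    (hΓ : 0 < Γ) (htail : ∀ l, n ≤ l → 4 * Γ ≤ |g l|) (hx : |x| ≤ 2 * Γ) :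
    Summable fun l => poleTerm (b l) (g l) x y :=
  (summable_nat_add_iff n).1 <|
    ((summable_nat_add_iff n).2 hs |>.mul_left 2).of_norm_bounded
      (norm_poleTerm_tail_le hb hΓ htail hx)

theorem abs_tsum_poleTerm_tail_le (hb : ∀ l, 0 ≤ b l) (hs : Summable fun l => b l / |g l|)
    (hΓ : 0 < Γ) (htail : ∀ l, n ≤ l → 4 * Γ ≤ |g l|) (hx : |x| ≤ 2 * Γ) :
    |∑' i, poleTerm (b (i + n)) (g (i + n)) x y| ≤ 2 * ∑' i, b (i + n) / |g (i + n)| := by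
  rw [← tsum_mul_left]
  exact tsum_of_norm_bounded ((summable_nat_add_iff n).2 hs |>.mul_left 2).hasSum
    (norm_poleTerm_tail_le hb hΓ htail hx)

theorem reShift_eq_sum_add_tsum (hb : ∀ l, 0 ≤ b l) (hs : Summable fun l => b l / |g l|)
    (hΓ : 0 < Γ) (htail : ∀ l, n ≤ l → 4 * Γ ≤ |g l|) (hx : |x| ≤ 2 * Γ) :
    reShift b g x y =
      ∑ l ∈ range n, poleTerm (b l) (g l) x y + ∑' i, poleTerm (b (i + n)) (g (i + n)) x y :=
  ((summable_poleTerm hb hs hΓ htail hx).sum_add_tsum_nat_add n).symm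

theorem abs_reShift_le (hb : ∀ l, 0 ≤ b l) (hs : Summable fun l => b l / |g l|)
    (hΓ : 0 < Γ) (htail : ∀ l, n ≤ l → 4 * Γ ≤ |g l|) (hx : |x| ≤ 2 * Γ) (hy : 1 ≤ y)
    (hheadSum : ∑ l ∈ range n, b l ≤ Γ / 4)
    (htailSum : ∑' i, b (i + n) / |g (i + n)| ≤ Γ / 8) :
    |reShift b g x y| ≤ Γ / 2 := by
  rw [reShift_eq_sum_add_tsum hb hs hΓ htail hx]
  have hhead := abs_sum_poleTerm_le (range n) hb (g := g) (x := x) hy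
  have htail := abs_tsum_poleTerm_tail_le (y := y) hb hs hΓ htail hx
  linarith [abs_add_le (∑ l ∈ range n, poleTerm (b l) (g l) x y)
    (∑' i, poleTerm (b (i + n)) (g (i + n)) x y)]

theorem reShift_nonpos (hb : ∀ l, 0 ≤ b l) (hs : Summable fun l => b l / |g l|)
    (hhead : ∀ l ≤ j, |g l| ≤ Γ) (htail : ∀ l, j + 1 ≤ l → 4 * Γ ≤ |g l|)
    (hctrl : ∑' i, b (i + (j + 1)) / |g (i + (j + 1))| ≤ b j / (40 * Γ))
    (hx : 3 / 2 * Γ < x) (hx' : x ≤ 2 * Γ) (hy : 0 ≤ y) (hyΓ : y ≤ Γ) :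
    reShift b g x y ≤ 0 := by
  have hΓ : 0 < Γ := by linarith
  have hxΓ : |x| ≤ 2 * Γ := abs_le.2 ⟨by linarith, hx'⟩
  have hearly : ∑ l ∈ range j, poleTerm (b l) (g l) x y ≤ 0 :=
    sum_nonpos fun l hl => poleTerm_nonpos (hb l)
      (by linarith [le_abs_self (g l), hhead l (mem_range.1 hl).le])
  have hkey := poleTerm_le_neg_div (hb j) (hhead j le_rfl) hx hx' hy hyΓ
  have htailAbs := abs_tsum_poleTerm_tail_le (y := y) hb hs hΓ htail hxΓ
  have hbΓ : 2 * (b j / (40 * Γ)) = b j / (20 * Γ) := by field_simp; ring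
  rw [reShift_eq_sum_add_tsum hb hs hΓ htail hxΓ, sum_range_succ]
  linarith [le_abs_self (∑' i, poleTerm (b (i + (j + 1))) (g (i + (j + 1))) x y)]

end ReShift

theorem abs_add_reShift_le {b g : ℕ → ℝ} {j : ℕ} {x y Γ : ℝ} (hb : ∀ l, 0 ≤ b l)
    (hs : Summable fun l => b l / |g l|)
    (hhead : ∀ l ≤ j, |g l| ≤ Γ) (htail : ∀ l, j + 1 ≤ l → 4 * Γ ≤ |g l|)
    (hheadSum : ∑ l ∈ range (j + 1), b l ≤ Γ / 4)
    (htailSum : ∑' i, b (i + (j + 1)) / |g (i + (j + 1))| ≤ Γ / 8)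
    (hctrl : ∑' i, b (i + (j + 1)) / |g (i + (j + 1))| ≤ b j / (40 * Γ))
    (hy : 1 ≤ y) (hyΓ : y ≤ Γ) (hx : |x| ≤ 2 * Γ) :
    |x + reShift b g x y| ≤ 2 * Γ := by
  have hsmall := abs_reShift_le hb hs (by linarith) htail hx hy hheadSum htailSum
  have hright : 3 / 2 * Γ < x → reShift b g x y ≤ 0 := fun h =>
    reShift_nonpos hb hs hhead htail hctrl h (abs_le.1 hx).2 (by linarith) hyΓ
  have hleft : x < -(3 / 2 * Γ) → 0 ≤ reShift b g x y := fun h => by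
    have := reShift_nonpos (g := -g) (x := -x) hb (by simpa using hs) (by simpa using hhead)
      (by simpa using htail) (by simpa using hctrl) (by linarith) (by linarith [(abs_le.1 hx).1])
      (by linarith) hyΓ
    rwa [reShift_neg_neg, neg_nonpos] at this
  rw [abs_le] at hx hsmall ⊢
  rcases lt_or_ge (3 / 2 * Γ) x with h | h
  · have := hright h
    constructor <;> linarith
  rcases lt_or_ge x (-(3 / 2 * Γ)) with h' | h'
  · have := hleft h'
    constructor <;> linarith
  constructor <;> linarith

section PoleMap

variable {b g : ℕ → ℝ} {z : ℂ}

theorem abs_im_le_norm_ofReal_sub (t : ℝ) (z : ℂ) : |z.im| ≤ ‖(t : ℂ) - z‖ := by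
  simpa using Complex.abs_im_le_norm ((t : ℂ) - z)

theorem abs_sub_re_le_norm_ofReal_sub (t : ℝ) (z : ℂ) : |t - z.re| ≤ ‖(t : ℂ) - z‖ := by
  simpa using Complex.abs_re_le_norm ((t : ℂ) - z)

theorem abs_le_mul_norm_ofReal_sub (t : ℝ) (hz : 0 < z.im) :
    |t| ≤ (1 + |z.re| / z.im) * ‖(t : ℂ) - z‖ := by
  have hy : z.im ≤ ‖(t : ℂ) - z‖ := (le_abs_self _).trans (abs_im_le_norm_ofReal_sub t z)
  have hx : |z.re| ≤ |z.re| / z.im * ‖(t : ℂ) - z‖ := by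
    rw [div_mul_eq_mul_div, le_div_iff₀ hz]
    exact mul_le_mul_of_nonneg_left hy (abs_nonneg _)
  linarith [abs_sub_abs_le_abs_sub t z.re, abs_sub_re_le_norm_ofReal_sub t z]

theorem summable_div_ofReal_sub (hb : ∀ l, 0 ≤ b l) (hg : ∀ l, g l ≠ 0)
    (hs : Summable fun l => b l / |g l|) (hz : 0 < z.im) :
    Summable fun l => (b l : ℂ) / ((g l : ℂ) - z) := by
  refine (hs.mul_left (1 + |z.re| / z.im)).of_norm_bounded fun l => ?_
  have hw : 0 < ‖(g l : ℂ) - z‖ :=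
    hz.trans_le ((le_abs_self _).trans (abs_im_le_norm_ofReal_sub _ _))
  have hbg : b l / |g l| * |g l| = b l := div_mul_cancel₀ _ (abs_ne_zero.2 (hg l))
  rw [norm_div, Complex.norm_real, Real.norm_of_nonneg (hb l), div_le_iff₀ hw]
  nlinarith [mul_le_mul_of_nonneg_left (abs_le_mul_norm_ofReal_sub (g l) hz)
    (div_nonneg (hb l) (abs_nonneg (g l)))]

theorem re_div_ofReal_sub (b g : ℝ) (z : ℂ) :
    ((b : ℂ) / ((g : ℂ) - z)).re = poleTerm b g z.re z.im := by
  simp only [Complex.div_re, Complex.ofReal_re, Complex.ofReal_im, Complex.sub_re,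
    Complex.sub_im, Complex.normSq_apply, zero_mul, zero_div, add_zero, poleTerm]
  ring

theorem im_div_ofReal_sub_nonneg {b g : ℝ} (hb : 0 ≤ b) (hz : 0 ≤ z.im) :
    0 ≤ ((b : ℂ) / ((g : ℂ) - z)).im := by
  simp only [Complex.div_im, Complex.ofReal_re, Complex.ofReal_im, Complex.sub_re,
    Complex.sub_im, zero_mul, zero_div, zero_sub, mul_neg, neg_div, neg_neg]
  exact div_nonneg (mul_nonneg hb hz) (Complex.normSq_nonneg _)

theorem poleMap_re (hsum : Summable fun l => (b l : ℂ) / ((g l : ℂ) - z)) :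
    (poleMap b g z).re = z.re + reShift b g z.re z.im := by
  simp only [poleMap, Complex.add_re, Complex.re_tsum hsum, re_div_ofReal_sub, reShift]

theorem im_le_im_poleMap (hb : ∀ l, 0 ≤ b l)
    (hsum : Summable fun l => (b l : ℂ) / ((g l : ℂ) - z)) (hz : 0 ≤ z.im) :
    z.im ≤ (poleMap b g z).im := by
  rw [poleMap, Complex.add_im, Complex.im_tsum hsum]
  exact le_add_of_nonneg_right (tsum_nonneg fun l => im_div_ofReal_sub_nonneg (hb l) hz)

theorem monotone_im_iterate_poleMap (hb : ∀ l, 0 ≤ b l) (hg : ∀ l, g l ≠ 0)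
    (hs : Summable fun l => b l / |g l|) (hz : 0 < z.im) :
    Monotone fun n => ((poleMap b g)^[n] z).im := by
  have step : ∀ w : ℂ, 0 < w.im → w.im ≤ (poleMap b g w).im := fun w hw =>
    im_le_im_poleMap hb (summable_div_ofReal_sub hb hg hs hw) hw.le
  have hpos : ∀ n, 0 < ((poleMap b g)^[n] z).im := by
    intro n
    induction n with
    | zero => exact hz
    | succ n ih =>
      rw [Function.iterate_succ_apply']
      exact ih.trans_le (step _ ih)
  exact monotone_nat_of_le_succ fun n => by
    simpa only [Function.iterate_succ_apply'] using step _ (hpos n)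

end PoleMap

theorem abs_re_iterate_poleMap_le {b g : ℕ → ℝ} {j : ℕ} {Γ c : ℝ} (hb : ∀ l, 0 ≤ b l)
    (hg : ∀ l, g l ≠ 0) (hs : Summable fun l => b l / |g l|)
    (hhead : ∀ l ≤ j, |g l| ≤ Γ) (htail : ∀ l, j + 1 ≤ l → 4 * Γ ≤ |g l|)
    (hheadSum : ∑ l ∈ range (j + 1), b l ≤ Γ / 4)
    (htailSum : ∑' i, b (i + (j + 1)) / |g (i + (j + 1))| ≤ Γ / 8)
    (hctrl : ∑' i, b (i + (j + 1)) / |g (i + (j + 1))| ≤ b j / (40 * Γ))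
    (hc : c ≤ Γ) (n : ℕ) (hn : ((poleMap b g)^[n] Complex.I).im ≤ c) :
    |((poleMap b g)^[n] Complex.I).re| ≤ 2 * Γ := by
  have hmono := monotone_im_iterate_poleMap hb hg hs (z := Complex.I) (by simp)
  have hy : ∀ m, 1 ≤ ((poleMap b g)^[m] Complex.I).im := fun m => by
    simpa only [Function.iterate_zero_apply, Complex.I_im] using hmono (Nat.zero_le m)
  induction n with
  | zero =>
    have := hy 0
    simp only [Function.iterate_zero_apply, Complex.I_re, abs_zero] at this hn ⊢
    linarith
  | succ n ih =>
    have hn' := (hmono n.le_succ).trans hn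
    rw [Function.iterate_succ_apply',
      poleMap_re (summable_div_ofReal_sub hb hg hs (by linarith [hy n]))]
    exact abs_add_reShift_le hb hs hhead htail hheadSum htailSum hctrl (hy n) (hn'.trans hc)
      (ih hn')

theorem orbit_control_slope_zero_pi_general (a γ : ℕ → ℝ)
    (hapos : ∀ k : ℕ, 1 ≤ k → 0 < a k)
    (hγne : ∀ k : ℕ, 1 ≤ k → γ k ≠ 0)
    (hsum : Summable (fun k : ℕ => a (k + 1) / |γ (k + 1)|))
    (hγgrow : ∀ k : ℕ, 1 ≤ k → 4 * |γ k| ≤ |γ (k + 1)|)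
    (hsmall₁ : ∀ k : ℕ, 1 ≤ k → ∑ l ∈ Finset.Icc 1 k, a l ≤ |γ k| / (4 * (k : ℝ)))
    (hsmall₂ : ∀ k : ℕ, 1 ≤ k →
      (∑' l : ℕ, a (k + 1 + l) / |γ (k + 1 + l)|) ≤ |γ k| / (8 * (k : ℝ)))
    (hctrl₂ : ∀ k : ℕ, 1 ≤ k →
      (∑' l : ℕ, a (k + 1 + l) / |γ (k + 1 + l)|) ≤ a k / (160 * (k : ℝ) * |γ k|)) :
    let f : ℂ → ℂ := fun z => z + ∑' k : ℕ, (a (k + 1) : ℂ) / ((γ (k + 1) : ℂ) - z)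
    ∀ k : ℕ, 1 ≤ k → ∀ n : ℕ,
      (f^[n] Complex.I).im ≤ |γ k| / (k : ℝ) →
      |(f^[n] Complex.I).re| ≤ 2 * |γ k| := by
  intro f k hk n hn
  obtain ⟨j, rfl⟩ : ∃ j, k = j + 1 := ⟨k - 1, by omega⟩
  have hΓ : 0 < |γ (j + 1)| := abs_pos.2 (hγne _ hk)
  have hk' : (1 : ℝ) ≤ ((j + 1 : ℕ) : ℝ) := by exact_mod_cast hk
  have hmono : Monotone fun l => |γ (l + 1)| := monotone_nat_of_le_succ fun l => by
    linarith [hγgrow (l + 1) (by omega), abs_nonneg (γ (l + 1))]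
  have htailEq : ∑' l, a (j + 1 + 1 + l) / |γ (j + 1 + 1 + l)| =
      ∑' i, a (i + (j + 1) + 1) / |γ (i + (j + 1) + 1)| :=
    tsum_congr fun i => by rw [show j + 1 + 1 + i = i + (j + 1) + 1 by omega]
  have hheadEq : ∑ l ∈ Finset.Icc 1 (j + 1), a l = ∑ l ∈ range (j + 1), a (l + 1) := by
    rw [range_eq_Ico, sum_Ico_add' a 0 (j + 1) 1]
    rfl
  refine abs_re_iterate_poleMap_le (b := fun l => a (l + 1)) (g := fun l => γ (l + 1)) (j := j)
    (fun l => (hapos _ (by omega)).le) (fun l => hγne _ (by omega)) hsum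
    (fun l hl => hmono hl) (fun l hl => (hγgrow _ hk).trans (hmono hl)) ?_ ?_ ?_
    (div_le_self hΓ.le hk') n hn
  · rw [← hheadEq]
    exact (hsmall₁ _ hk).trans (div_le_div_of_nonneg_left hΓ.le (by norm_num) (by linarith))
  · rw [← htailEq]
    exact (hsmall₂ _ hk).trans (div_le_div_of_nonneg_left hΓ.le (by norm_num) (by linarith))
  · rw [← htailEq]
    exact (hctrl₂ _ hk).trans
      (div_le_div_of_nonneg_left (hapos _ hk).le (by positivity) (by nlinarith))

/-- orbit control for the example with slope set `[0, π]`. Under the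
summability and growth conditions on `(a_k)` and `(γ_k)` (conditions (1)-(4) of the
paper), for the orbit `z_n = x_n + i y_n = f^[n](i)` of `f(z) = z + ∑_k a_k/(γ_k - z)`,
whenever `y_n ≤ |γ_k|/k` one has `|x_n| ≤ 2|γ_k|`. -/
theorem orbit_control_slope_zero_pi (a γ : ℕ → ℝ)
    (hapos : ∀ k : ℕ, 1 ≤ k → 0 < a k)
    (hγne : ∀ k : ℕ, 1 ≤ k → γ k ≠ 0)
    (hsum : Summable (fun k : ℕ => a (k + 1) / |γ (k + 1)|))
    (hsign : ∀ k : ℕ, 1 ≤ k → γ k = (-1 : ℝ) ^ k * |γ k|)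
    (hγ1 : 1 ≤ |γ 1|)
    (hγgrow : ∀ k : ℕ, 1 ≤ k → 4 * |γ k| ≤ |γ (k + 1)|)
    (hsmall₁ : ∀ k : ℕ, 1 ≤ k → ∑ l ∈ Finset.Icc 1 k, a l ≤ |γ k| / (4 * (k : ℝ)))
    (hsmall₂ : ∀ k : ℕ, 1 ≤ k →
      (∑' l : ℕ, a (k + 1 + l) / |γ (k + 1 + l)|) ≤ |γ k| / (8 * (k : ℝ)))
    (hctrl₁ : ∀ k : ℕ, 1 ≤ k →
      ∑ l ∈ Finset.Icc 1 (k - 1), a l ≤ a k / (80 * (k : ℝ)))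
    (hctrl₂ : ∀ k : ℕ, 1 ≤ k →
      (∑' l : ℕ, a (k + 1 + l) / |γ (k + 1 + l)|) ≤ a k / (160 * (k : ℝ) * |γ k|)) :
    let f : ℂ → ℂ := fun z => z + ∑' k : ℕ, (a (k + 1) : ℂ) / ((γ (k + 1) : ℂ) - z)
    ∀ k : ℕ, 1 ≤ k → ∀ n : ℕ,
      (f^[n] Complex.I).im ≤ |γ k| / (k : ℝ) →
      |(f^[n] Complex.I).re| ≤ 2 * |γ k| :=
  orbit_control_slope_zero_pi_general a γ hapos hγne hsum hγgrow hsmall₁ hsmall₂ hctrl₂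
end
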